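/- For every integral cache state x, the service cost admits the equivalent expression C(x) = − ∑_{i=1}^{K−1} α_i · min{ k − σ_i, (∑_{j=1}^{i} x_{π_j}) − σ_i } + ∑_{i=1}^{K} c(π_i) · 𝟙{ π_i > N }. -/

import Mathlib

/-!
Both sides are capped costs: with the positions sorted by cost, pay `c (π i)` for every selected
position until `k` positions have been selected. For the cache state the selection is `x ∘ π`; for
the second sum it is the set of server copies, whose first `k` occupy exactly the positions
`1, …, K`. Such a cost equals `∑ c (π i) (min(k, S_i) - min(k, S_{i-1}))` for the prefix counts
`S_i`, so summing by parts turns the difference of the two costs into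
`-∑ α_i (min(k, T_i) - min(k, σ_i))`, where `T_i = ∑_{j ≤ i} x (π j)`. The terms with `i ≥ K`
vanish because `k ≤ σ_i ≤ T_i`: every server copy `u + N` in a prefix is preceded by `u`, and
`x u + x (u + N) = 1`. For `i < K` the term is `min(k - σ_i, T_i - σ_i)`.
-/

namespace ACAI

/-- `sigma N π i` = number of indices `j ∈ {1,…,i}` with `π j > N`, i.e. the number of
objects among the `i` cheapest that are served from the server. -/
def sigma (N : ℕ) (π : ℕ → ℕ) (i : ℕ) : ℕ :=
  ((Finset.Icc 1 i).filter (fun j => N < π j)).card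

/-- `Kmin N k π` = least index `i` with `sigma N π i = k`. -/
noncomputable def Kmin (N k : ℕ) (π : ℕ → ℕ) : ℕ :=
  sInf {i | sigma N π i = k}

/-- `alpha c π i = c (π (i+1)) - c (π i)`. -/
noncomputable def alpha (c : ℕ → ℝ) (π : ℕ → ℕ) (i : ℕ) : ℝ :=
  c (π (i + 1)) - c (π i)

/-- A fractional cache state: `y ∈ [0,1]^{2N}` with `∑_{i=1}^{N} y i = h` and
`y (i+N) = 1 - y i` for `i ∈ {1,…,N}`. -/
def IsFrac (N h : ℕ) (y : ℕ → ℝ) : Prop :=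
  (∀ i ∈ Finset.Icc 1 (2 * N), y i ∈ Set.Icc (0 : ℝ) 1) ∧
  (∑ i ∈ Finset.Icc 1 N, y i = (h : ℝ)) ∧
  (∀ i ∈ Finset.Icc 1 N, y (i + N) = 1 - y i)

/-- An integral cache state: a fractional cache state with `{0,1}` coordinates. -/
def IsInt (N h : ℕ) (y : ℕ → ℝ) : Prop :=
  IsFrac N h y ∧ ∀ i ∈ Finset.Icc 1 (2 * N), y i = 0 ∨ y i = 1

/-- A request over the augmented catalog `U = {1,…,2N}`: nonnegative costs `c` with
`c (i+N) = c i + cf` for catalog objects `i ∈ {1,…,N}`, and a bijection `π` of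
`{1,…,2N}` sorting the costs nondecreasingly and placing each `i ∈ {1,…,N}` before
`i + N`. -/
def Request (N : ℕ) (cf : ℝ) (c : ℕ → ℝ) (π : ℕ → ℕ) : Prop :=
  (∀ i ∈ Finset.Icc 1 (2 * N), 0 ≤ c i) ∧
  (∀ i ∈ Finset.Icc 1 N, c (i + N) = c i + cf) ∧
  Set.BijOn π (Set.Icc 1 (2 * N)) (Set.Icc 1 (2 * N)) ∧
  (∀ i, 1 ≤ i → i < 2 * N → c (π i) ≤ c (π (i + 1))) ∧
  (∀ j l, j ∈ Set.Icc 1 (2 * N) → l ∈ Set.Icc 1 (2 * N) →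
    π j ≤ N → π l = π j + N → j < l)

/-- The caching gain
`G(y) = ∑_{i=1}^{K-1} α_i · min { k - σ_i, (∑_{j=1}^{i} y_{π j}) - σ_i }`. -/
noncomputable def gain (N k : ℕ) (c : ℕ → ℝ) (π : ℕ → ℕ) (y : ℕ → ℝ) : ℝ :=
  ∑ i ∈ Finset.Icc 1 (Kmin N k π - 1),
    alpha c π i *
      min ((k : ℝ) - sigma N π i) ((∑ j ∈ Finset.Icc 1 i, y (π j)) - sigma N π i)

/-- `Iset N π i = { j ∈ {1,…,i} : π j ≤ N and π j + N ∉ {π 1, …, π i} }`. -/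
def Iset (N : ℕ) (π : ℕ → ℕ) (i : ℕ) : Finset ℕ :=
  (Finset.Icc 1 i).filter (fun j => π j ≤ N ∧ ∀ l ∈ Finset.Icc (1 : ℕ) i, π l ≠ π j + N)

/-- The auxiliary (multilinear) gain
`L(y) = ∑_{i=1}^{K-1} α_i (k - σ_i) (1 - ∏_{j ∈ I_i} (1 - y_{π j}/(k - σ_i)))`. -/
noncomputable def aux (N k : ℕ) (c : ℕ → ℝ) (π : ℕ → ℕ) (y : ℕ → ℝ) : ℝ :=
  ∑ i ∈ Finset.Icc 1 (Kmin N k π - 1),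
    alpha c π i * ((k : ℝ) - sigma N π i) *
      (1 - ∏ j ∈ Iset N π i, (1 - y (π j) / ((k : ℝ) - sigma N π i)))

/-- The service cost
`C(x) = ∑_{i=1}^{2N} c (π i) · x_{π i} · 𝟙{∑_{j=1}^{i-1} x_{π j} < k}`. -/
noncomputable def cost (N k : ℕ) (c : ℕ → ℝ) (π : ℕ → ℕ) (x : ℕ → ℝ) : ℝ :=
  ∑ i ∈ Finset.Icc 1 (2 * N),
    c (π i) * x (π i) *
      (if (∑ j ∈ Finset.Icc 1 (i - 1), x (π j)) < (k : ℝ) then 1 else 0)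

/-- The empty-cache allocation: `x₀ i = 0` for `i ∈ {1,…,N}` and `x₀ i = 1` for
`i ∈ {N+1,…,2N}`. -/
def emptyCache (N : ℕ) : ℕ → ℝ := fun i => if i ≤ N then 0 else 1

open Finset

noncomputable def cappedCost (k M : ℕ) (c b : ℕ → ℝ) : ℝ :=
  ∑ i ∈ Icc 1 M, c i * b i * if ∑ j ∈ Icc 1 (i - 1), b j < k then 1 else 0

theorem exists_sum_Icc_eq_natCast {b : ℕ → ℝ} {M : ℕ} (hb : ∀ i ∈ Icc 1 M, b i = 0 ∨ b i = 1)
    {i : ℕ} (hi : i ≤ M) : ∃ n : ℕ, ∑ j ∈ Icc 1 i, b j = n := by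
  refine ⟨#{j ∈ Icc 1 i | b j = 1}, ?_⟩
  rw [← sum_boole]
  refine sum_congr rfl fun j hj => ?_
  have hjM : j ∈ Icc 1 M := by simp only [mem_Icc] at hj ⊢; omega
  rcases hb j hjM with h | h <;> simp [h]

theorem min_sum_Icc_sub_min_sum_Icc_pred {b : ℕ → ℝ} {M : ℕ}
    (hb : ∀ i ∈ Icc 1 M, b i = 0 ∨ b i = 1) (k : ℕ) {i : ℕ} (hi : i ∈ Icc 1 M) :
    min (k : ℝ) (∑ j ∈ Icc 1 i, b j) - min (k : ℝ) (∑ j ∈ Icc 1 (i - 1), b j) =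
      b i * if ∑ j ∈ Icc 1 (i - 1), b j < k then 1 else 0 := by
  have hi1 : i = i - 1 + 1 := by simp only [mem_Icc] at hi; omega
  obtain ⟨n, hn⟩ := exists_sum_Icc_eq_natCast hb (i := i - 1) (by simp only [mem_Icc] at hi; omega)
  conv_lhs => rw [hi1, sum_Icc_succ_top (by omega), ← hi1]
  rw [hn]
  rcases hb i hi with h | h
  · simp [h]
  · rw [h]
    by_cases hnk : n < k
    · -- the prefix sum is an integer, so it stays `≤ k` after the increment
      have : (n : ℝ) + 1 ≤ k := by exact_mod_cast hnk
      rw [if_pos (by exact_mod_cast hnk), min_eq_right this, min_eq_right (by linarith)]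
      ring
    · have : (k : ℝ) ≤ n := by exact_mod_cast not_lt.mp hnk
      rw [if_neg (by exact_mod_cast hnk), min_eq_left this, min_eq_left (by linarith)]
      ring

theorem sum_Icc_mul_sub_pred (c d : ℕ → ℝ) (hd : d 0 = 0) (M : ℕ) :
    ∑ i ∈ Icc 1 M, c i * (d i - d (i - 1)) =
      c M * d M - ∑ i ∈ Icc 1 (M - 1), (c (i + 1) - c i) * d i := by
  induction M with
  | zero => simp [hd]
  | succ M ih =>
    rw [sum_Icc_succ_top (by omega), ih, Nat.add_sub_cancel]
    rcases M with _ | M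
    · simp [hd]
    · rw [Nat.add_sub_cancel, sum_Icc_succ_top (by omega)]
      ring

theorem cappedCost_eq_sum_mul_sub {k M : ℕ} (c : ℕ → ℝ) {b : ℕ → ℝ}
    (hb : ∀ i ∈ Icc 1 M, b i = 0 ∨ b i = 1) :
    cappedCost k M c b =
      ∑ i ∈ Icc 1 M, c i * (min (k : ℝ) (∑ j ∈ Icc 1 i, b j) -
        min (k : ℝ) (∑ j ∈ Icc 1 (i - 1), b j)) :=
  sum_congr rfl fun i hi => by rw [min_sum_Icc_sub_min_sum_Icc_pred hb k hi, mul_assoc]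

theorem cappedCost_sub_cappedCost {k M L : ℕ} (c : ℕ → ℝ) {b b' : ℕ → ℝ}
    (hb : ∀ i ∈ Icc 1 M, b i = 0 ∨ b i = 1) (hb' : ∀ i ∈ Icc 1 M, b' i = 0 ∨ b' i = 1)
    (hLM : L ≤ M) (hlt : ∀ i < L, ∑ j ∈ Icc 1 i, b' j ≤ k)
    (hge : ∀ i, L ≤ i → i ≤ M → k ≤ ∑ j ∈ Icc 1 i, b j ∧ k ≤ ∑ j ∈ Icc 1 i, b' j) :
    cappedCost k M c b - cappedCost k M c b' =
      -∑ i ∈ Icc 1 (L - 1), (c (i + 1) - c i) *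
        min ((k : ℝ) - ∑ j ∈ Icc 1 i, b' j) (∑ j ∈ Icc 1 i, b j - ∑ j ∈ Icc 1 i, b' j) := by
  set d : ℕ → ℝ := fun i =>
    min (k : ℝ) (∑ j ∈ Icc 1 i, b j) - min (k : ℝ) (∑ j ∈ Icc 1 i, b' j)
  have hd_eq : ∀ i < L, d i =
      min ((k : ℝ) - ∑ j ∈ Icc 1 i, b' j) (∑ j ∈ Icc 1 i, b j - ∑ j ∈ Icc 1 i, b' j) := by
    intro i hi
    dsimp only [d]
    rw [min_sub_sub_right, min_eq_right (hlt i hi)]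
  have hd_zero : ∀ i, L ≤ i → i ≤ M → d i = 0 := by
    intro i hLi hiM
    obtain ⟨h, h'⟩ := hge i hLi hiM
    dsimp only [d]
    rw [min_eq_left h, min_eq_left h', sub_self]
  rw [cappedCost_eq_sum_mul_sub c hb, cappedCost_eq_sum_mul_sub c hb', ← sum_sub_distrib]
  calc _ = ∑ i ∈ Icc 1 M, c i * (d i - d (i - 1)) :=
        sum_congr rfl fun i _ => by dsimp only [d]; ring
    _ = -∑ i ∈ Icc 1 (M - 1), (c (i + 1) - c i) * d i := by
      rw [sum_Icc_mul_sub_pred c d (by simp [d]) M, hd_zero M hLM le_rfl, mul_zero, zero_sub]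
    _ = -∑ i ∈ Icc 1 (L - 1), (c (i + 1) - c i) * d i := by
      refine congrArg Neg.neg (sum_subset (Icc_subset_Icc_right (by omega)) fun i hi hiL => ?_).symm
      simp only [mem_Icc] at hi hiL
      rw [hd_zero i (by omega) (by omega), mul_zero]
    _ = _ := by
      refine congrArg Neg.neg (sum_congr rfl fun i hi => ?_)
      simp only [mem_Icc] at hi
      rw [hd_eq i (by omega)]

theorem card_filter_lt_le_sum {N : ℕ} {P : Finset ℕ} {x : ℕ → ℝ}
    (hP : ∀ u ∈ P, N < u → u - N ∈ P) (hPN : ∀ u ∈ P, u ≤ 2 * N) (hx0 : ∀ u ∈ P, 0 ≤ x u)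
    (hx : ∀ u ∈ P, N < u → x u + x (u - N) = 1) :
    (#{u ∈ P | N < u} : ℝ) ≤ ∑ u ∈ P, x u := by
  have hinj : Set.InjOn (· - N) ({u ∈ P | N < u} : Finset ℕ) := by
    intro u hu v hv huv
    simp only [coe_filter, Set.mem_ofPred_eq] at hu hv
    have : u - N = v - N := huv
    omega
  have hsub : ({u ∈ P | N < u} : Finset ℕ).image (· - N) ⊆ {u ∈ P | ¬N < u} := by
    intro v hv
    simp only [mem_image, mem_filter] at hv ⊢
    obtain ⟨u, ⟨hu, hNu⟩, rfl⟩ := hv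
    exact ⟨hP u hu hNu, by have := hPN u hu; omega⟩
  calc (#{u ∈ P | N < u} : ℝ)
      = ∑ u ∈ P with N < u, (x u + x (u - N)) := by
        rw [sum_congr rfl fun u hu => hx u (mem_filter.mp hu).1 (mem_filter.mp hu).2,
          sum_const, nsmul_one]
    _ = ∑ u ∈ P with N < u, x u + ∑ v ∈ ({u ∈ P | N < u} : Finset ℕ).image (· - N), x v := by
        rw [sum_add_distrib, sum_image hinj]
    _ ≤ ∑ u ∈ P with N < u, x u + ∑ u ∈ P with ¬N < u, x u := by
        gcongr
        exact fun u hu _ => hx0 u (mem_filter.mp hu).1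
    _ = ∑ u ∈ P, x u := sum_filter_add_sum_filter_not _ _ _

theorem exists_le_eq_of_le_of_le_add_one {f : ℕ → ℕ} (h0 : f 0 = 0)
    (hstep : ∀ i, f (i + 1) ≤ f i + 1) {k M : ℕ} (hk : k ≤ f M) : ∃ i ≤ M, f i = k := by
  induction M with
  | zero => exact ⟨0, le_rfl, by omega⟩
  | succ M ih =>
    by_cases hkM : k ≤ f M
    · obtain ⟨i, hiM, hi⟩ := ih hkM
      exact ⟨i, by omega, hi⟩
    · exact ⟨M + 1, le_rfl, by have := hstep M; omega⟩

section Request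

variable {N : ℕ} {π : ℕ → ℕ}

theorem cost_eq_cappedCost (k : ℕ) (c x : ℕ → ℝ) :
    cost N k c π x = cappedCost k (2 * N) (fun i => c (π i)) (fun i => x (π i)) :=
  rfl

theorem sigma_succ (i : ℕ) :
    sigma N π (i + 1) = sigma N π i + if N < π (i + 1) then 1 else 0 := by
  simp only [sigma, card_filter]
  exact sum_Icc_succ_top (by omega) _

theorem sigma_mono : Monotone (sigma N π) := fun _ _ hij =>
  card_le_card (filter_subset_filter _ (Icc_subset_Icc_right hij))

theorem sigma_cast_eq_sum (i : ℕ) :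
    (sigma N π i : ℝ) = ∑ j ∈ Icc 1 i, if N < π j then 1 else 0 := by
  rw [sum_boole, sigma]

variable (hπ : Set.BijOn π (Set.Icc 1 (2 * N)) (Set.Icc 1 (2 * N)))
include hπ

theorem injOn_Icc_of_le {i : ℕ} (hi : i ≤ 2 * N) : Set.InjOn π (Icc 1 i : Finset ℕ) :=
  hπ.injOn.mono fun j hj => by simp only [coe_Icc, Set.mem_Icc] at hj ⊢; omega

theorem sigma_eq_card_image {i : ℕ} (hi : i ≤ 2 * N) :
    sigma N π i = #{u ∈ (Icc 1 i).image π | N < u} := by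
  rw [sigma, filter_image,
    card_image_of_injOn ((injOn_Icc_of_le hπ hi).mono (coe_subset.mpr (filter_subset _ _)))]

theorem sigma_two_mul : sigma N π (2 * N) = N := by
  have himage : (Icc 1 (2 * N)).image π = Icc 1 (2 * N) := by
    simpa only [← coe_inj, coe_image, coe_Icc] using hπ.image_eq
  have hserver : ({u ∈ Icc 1 (2 * N) | N < u} : Finset ℕ) = Icc (N + 1) (2 * N) := by
    ext
    simp only [mem_filter, mem_Icc]
    omega
  rw [sigma_eq_card_image hπ le_rfl, himage, hserver, Nat.card_Icc]
  omega

theorem exists_sigma_eq {k : ℕ} (hkN : k ≤ N) : ∃ i, sigma N π i = k := by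
  obtain ⟨i, -, hi⟩ := exists_le_eq_of_le_of_le_add_one (f := sigma N π) (by simp [sigma])
    (fun i => by rw [sigma_succ]; split <;> omega) (k := k) (M := 2 * N) (by rwa [sigma_two_mul hπ])
  exact ⟨i, hi⟩

theorem sigma_lt_iff_lt_Kmin {k : ℕ} (hkN : k ≤ N) {i : ℕ} :
    sigma N π i < k ↔ i < Kmin N k π := by
  have hK : sigma N π (Kmin N k π) = k := Nat.sInf_mem (exists_sigma_eq hπ hkN)
  constructor
  · intro hi
    by_contra! hKi
    have := sigma_mono (N := N) (π := π) hKi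
    omega
  · intro hi
    have := sigma_mono (N := N) (π := π) hi.le
    have : sigma N π i ≠ k := Nat.notMem_of_lt_sInf (s := {i | sigma N π i = k}) hi
    omega

theorem Kmin_le_two_mul {k : ℕ} (hkN : k ≤ N) : Kmin N k π ≤ 2 * N := by
  by_contra! h
  have := (sigma_lt_iff_lt_Kmin hπ hkN).mpr h
  rw [sigma_two_mul hπ] at this
  omega

theorem sum_Icc_Kmin_eq_cappedCost {k : ℕ} (hkN : k ≤ N) (c : ℕ → ℝ) :
    ∑ i ∈ Icc 1 (Kmin N k π), c (π i) * (if N < π i then 1 else 0) =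
      cappedCost k (2 * N) (fun i => c (π i)) (fun i => if N < π i then 1 else 0) := by
  have hK := Kmin_le_two_mul hπ hkN
  have hprefix : ∀ i,
      ((∑ j ∈ Icc 1 (i - 1), if N < π j then 1 else 0 : ℝ) < k ↔ i - 1 < Kmin N k π) := fun i => by
    rw [← sigma_cast_eq_sum, Nat.cast_lt, sigma_lt_iff_lt_Kmin hπ hkN]
  unfold cappedCost
  refine (sum_congr rfl fun i hi => ?_).trans
    (sum_subset (Icc_subset_Icc_right hK) fun i hi hiK => ?_)
  · simp only [mem_Icc] at hi
    rw [if_pos ((hprefix i).mpr (by omega)), mul_one]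
  · simp only [mem_Icc] at hi hiK
    rw [if_neg (by rw [hprefix]; omega), mul_zero]

theorem mem_Icc_of_mem_image_Icc {i : ℕ} (hi : i ≤ 2 * N) {u : ℕ} (hu : u ∈ (Icc 1 i).image π) :
    u ∈ Icc 1 (2 * N) := by
  obtain ⟨j, hj, rfl⟩ := mem_image.mp hu
  simp only [mem_Icc] at hj ⊢
  exact hπ.mapsTo ⟨hj.1, by omega⟩

variable (hord : ∀ j l, j ∈ Set.Icc 1 (2 * N) → l ∈ Set.Icc 1 (2 * N) →
  π j ≤ N → π l = π j + N → j < l)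
include hord

theorem sub_mem_image_Icc {i : ℕ} (hi : i ≤ 2 * N) {u : ℕ} (hu : u ∈ (Icc 1 i).image π)
    (hNu : N < u) : u - N ∈ (Icc 1 i).image π := by
  have hu2N := mem_Icc.mp (mem_Icc_of_mem_image_Icc hπ hi hu)
  obtain ⟨j, hj, rfl⟩ := mem_image.mp hu
  rw [mem_Icc] at hj
  obtain ⟨l, hl, hlj⟩ := hπ.surjOn (show π j - N ∈ Set.Icc 1 (2 * N) from ⟨by omega, by omega⟩)
  have := hord l j hl ⟨hj.1, by omega⟩ (by omega) (by omega)
  exact mem_image.mpr ⟨l, mem_Icc.mpr ⟨hl.1, by omega⟩, hlj⟩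

theorem sigma_le_sum_Icc {x : ℕ → ℝ} (hx0 : ∀ u ∈ Icc 1 (2 * N), 0 ≤ x u)
    (hxc : ∀ u ∈ Icc 1 N, x (u + N) = 1 - x u) {i : ℕ} (hi : i ≤ 2 * N) :
    (sigma N π i : ℝ) ≤ ∑ j ∈ Icc 1 i, x (π j) := by
  have hP : ∀ {u}, u ∈ (Icc 1 i).image π → u ∈ Icc 1 (2 * N) := mem_Icc_of_mem_image_Icc hπ hi
  rw [sigma_eq_card_image hπ hi, ← sum_image (injOn_Icc_of_le hπ hi)]
  refine card_filter_lt_le_sum (fun _ => sub_mem_image_Icc hπ hord hi)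
    (fun u hu => (mem_Icc.mp (hP hu)).2) (fun u hu => hx0 u (hP hu)) fun u hu hNu => ?_
  have hu := mem_Icc.mp (hP hu)
  have := hxc (u - N) (mem_Icc.mpr ⟨by omega, by omega⟩)
  rw [Nat.sub_add_cancel hNu.le] at this
  linarith

end Request

theorem cost_equivalent_expression_general
    (N k h : ℕ) (hkh : k ≤ h) (hhN : h ≤ N)
    (cf : ℝ) (c : ℕ → ℝ) (π : ℕ → ℕ)
    (hreq : Request N cf c π)
    (x : ℕ → ℝ) (hx : IsInt N h x) :
    cost N k c π x =
      - (∑ i ∈ Finset.Icc 1 (Kmin N k π - 1),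
          alpha c π i *
            min ((k : ℝ) - sigma N π i)
              ((∑ j ∈ Finset.Icc 1 i, x (π j)) - sigma N π i))
      + ∑ i ∈ Finset.Icc 1 (Kmin N k π),
          c (π i) * (if N < π i then 1 else 0) := by
  obtain ⟨-, -, hπ, -, hord⟩ := hreq
  obtain ⟨⟨hx01, -, hxc⟩, hxint⟩ := hx
  have hkN : k ≤ N := hkh.trans hhN
  have hx_bool : ∀ i ∈ Icc 1 (2 * N), x (π i) = 0 ∨ x (π i) = 1 := fun i hi =>
    hxint _ (mem_Icc.mpr (hπ.mapsTo (mem_Icc.mp hi)))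
  have hσ_bool : ∀ i ∈ Icc 1 (2 * N), (if N < π i then 1 else 0 : ℝ) = 0 ∨
      (if N < π i then 1 else 0 : ℝ) = 1 :=
    fun i _ => by split_ifs <;> simp
  have hσ_lt : ∀ i < Kmin N k π, sigma N π i < k := fun _ => (sigma_lt_iff_lt_Kmin hπ hkN).mpr
  have hσ_ge : ∀ i, Kmin N k π ≤ i → k ≤ sigma N π i := fun _ hi =>
    not_lt.mp fun h => ((sigma_lt_iff_lt_Kmin hπ hkN).mp h).not_ge hi
  have hσ_le : ∀ i ≤ 2 * N, (sigma N π i : ℝ) ≤ ∑ j ∈ Icc 1 i, x (π j) :=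
    fun _ => sigma_le_sum_Icc hπ hord (fun u hu => (hx01 u hu).1) hxc
  have key := cappedCost_sub_cappedCost (fun i => c (π i)) hx_bool hσ_bool
    (Kmin_le_two_mul hπ hkN)
    (fun i hi => by rw [← sigma_cast_eq_sum]; exact_mod_cast (hσ_lt i hi).le)
    (fun i hKi hi => by
      rw [← sigma_cast_eq_sum]
      exact ⟨(Nat.cast_le.mpr (hσ_ge i hKi)).trans (hσ_le i hi), Nat.cast_le.mpr (hσ_ge i hKi)⟩)
  simp only [← sigma_cast_eq_sum] at key
  rw [cost_eq_cappedCost, sum_Icc_Kmin_eq_cappedCost hπ hkN, ← sub_eq_iff_eq_add, key]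
  rfl

/-- **Equivalent expression of the service cost (Lemma 1).**
For every integral cache state `x`,
`C(x) = - ∑_{i=1}^{K-1} α_i · min { k - σ_i, (∑_{j=1}^{i} x_{π j}) - σ_i }
        + ∑_{i=1}^{K} c (π i) · 𝟙{π i > N}`. -/
theorem cost_equivalent_expression
    (N k h : ℕ) (hN : 0 < N) (hk : 0 < k) (hkh : k ≤ h) (hhN : h ≤ N)
    (cf : ℝ) (hcf : 0 < cf) (c : ℕ → ℝ) (π : ℕ → ℕ)
    (hreq : Request N cf c π)
    (x : ℕ → ℝ) (hx : IsInt N h x) :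
    cost N k c π x =
      - (∑ i ∈ Finset.Icc 1 (Kmin N k π - 1),
          alpha c π i *
            min ((k : ℝ) - sigma N π i)
              ((∑ j ∈ Finset.Icc 1 i, x (π j)) - sigma N π i))
      + ∑ i ∈ Finset.Icc 1 (Kmin N k π),
          c (π i) * (if N < π i then 1 else 0) :=
  cost_equivalent_expression_general N k h hkh hhN cf c π hreq x hx

end ACAI
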